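/- arXiv:1305.3600 — 9 statements merged into one kernel-verified Lean document; each statement's English description precedes it below -/
import Mathlib

section
/- Let $T : X \to X$ be a Banach $G$-contraction with contractive constant $\alpha \in (0,1)$ on a uniform space $X$ endowed with a graph $G$. Then for each $x \in X$, each $y$ in the connected component $[x]_{\widetilde{G}}$ of $x$ in the symmetrized graph $\widetilde{G}$, and each basic entourage $V$, there exists $r > 0$ such that $(T^n x, T^n y) \in \alpha^n r V$ for all $n \ge 1$. -/
open Filter Topology Set

/-- A pseudometric on `X`. -/
def IsPseudoMetric {X : Type*} (d : X → X → ℝ) : Prop :=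
  (∀ x, d x x = 0) ∧ (∀ x y, d x y = d y x) ∧ (∀ x y z, d x z ≤ d x y + d y z)

/-- The set `V(ρ, r) = {(x,y) : ρ(x,y) < r}`. -/
def VEnt {X : Type*} (d : X → X → ℝ) (r : ℝ) : Set (X × X) := {p | d p.1 p.2 < r}

/-- The scaled basic entourage `α V = ⋂ i, V(ρ i, α * r i)`. -/
def scaledEnt {X : Type*} {m : ℕ} (ρ : Fin m → X → X → ℝ) (r : Fin m → ℝ) (α : ℝ) :
    Set (X × X) := ⋂ i, VEnt (ρ i) (α * r i)

/-- The uniformity of `X` is generated by the family `F` of pseudometrics: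
each `V(F i, r)` is an entourage, and the basic entourages form a base. -/
def GeneratesUniformity {X ι : Type*} [UniformSpace X] (F : ι → X → X → ℝ) : Prop :=
  (∀ i, IsPseudoMetric (F i)) ∧
  (∀ i (r : ℝ), 0 < r → VEnt (F i) r ∈ uniformity X) ∧
  (∀ U ∈ uniformity X, ∃ (m : ℕ) (f : Fin m → ι) (r : Fin m → ℝ),
    (∀ i, 0 < r i) ∧ scaledEnt (fun i => F (f i)) r 1 ⊆ U)

/-- `T` is a Banach `G`-contraction (with edge set `E`) with contractive constant `α`,
with respect to the family `F` of pseudometrics. -/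
def BanachGContraction {X ι : Type*} (F : ι → X → X → ℝ) (E : Set (X × X))
    (T : X → X) (α : ℝ) : Prop :=
  (∀ x y : X, (x, y) ∈ E → (T x, T y) ∈ E) ∧
  (∀ (m : ℕ) (f : Fin m → ι) (r : Fin m → ℝ), (∀ i, 0 < r i) →
    ∀ x y : X, (x, y) ∈ scaledEnt (fun i => F (f i)) r 1 ∩ E →
      (T x, T y) ∈ scaledEnt (fun i => F (f i)) r α)

/-- The relation of the symmetrized graph `G̃`. -/
def symRel {X : Type*} (E : Set (X × X)) (a b : X) : Prop := (a, b) ∈ E ∨ (b, a) ∈ E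

/-- The edge set of the symmetrized graph `G̃`. -/
def symEdges {X : Type*} (E : Set (X × X)) : Set (X × X) :=
  E ∪ {p | (p.2, p.1) ∈ E}

/-- The component `[x]_{G̃}` of `x`: all points joined to `x` by a path in `G̃`. -/
def component {X : Type*} (E : Set (X × X)) (x : X) : Set X :=
  {y | Relation.ReflTransGen (symRel E) x y}


lemma edge_bound {X ι : Type*} (F : ι → X → X → ℝ) (hF : ∀ i, IsPseudoMetric (F i))
    (E : Set (X × X)) (T : X → X) (α : ℝ) (hα0 : 0 < α)
    (hT : BanachGContraction F E T α)
    (m : ℕ) (f : Fin m → ι) (r : Fin m → ℝ) (hr : ∀ i, 0 < r i)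
    (a b : X) (hab : (a, b) ∈ E) :
    ∃ c : ℝ, 0 < c ∧ ∀ n : ℕ, ∀ i, F (f i) (T^[n] a) (T^[n] b) < α ^ n * c * r i := by
  obtain ⟨c, hc⟩ : ∃ c : ℝ, c = 1 + ∑ i : Fin m, |F (f i) a b| / r i := ⟨_, rfl⟩
  have hsum_nonneg : 0 ≤ ∑ i : Fin m, |F (f i) a b| / r i :=
    Finset.sum_nonneg fun i _ => div_nonneg (abs_nonneg _) (hr i).le
  have hcpos : 0 < c := by rw [hc]; linarith
  refine ⟨c, hcpos, ?_⟩
  have key : ∀ n : ℕ, (T^[n] a, T^[n] b) ∈ E ∧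
      ∀ i, F (f i) (T^[n] a) (T^[n] b) < α ^ n * c * r i := by
    intro n
    induction n with
    | zero =>
      refine ⟨hab, fun i => ?_⟩
      simp only [Function.iterate_zero_apply, pow_zero, one_mul]
      have hterm : |F (f i) a b| / r i ≤ ∑ j : Fin m, |F (f j) a b| / r j :=
        Finset.single_le_sum (f := fun j => |F (f j) a b| / r j)
          (fun j _ => div_nonneg (abs_nonneg _) (hr j).le) (Finset.mem_univ i)
      have h1 : F (f i) a b ≤ (∑ j : Fin m, |F (f j) a b| / r j) * r i := by
        calc F (f i) a b ≤ |F (f i) a b| := le_abs_self _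
        _ = (|F (f i) a b| / r i) * r i := by rw [div_mul_cancel₀]; exact (hr i).ne'
        _ ≤ (∑ j : Fin m, |F (f j) a b| / r j) * r i :=
            mul_le_mul_of_nonneg_right hterm (hr i).le
      have h2 : (∑ j : Fin m, |F (f j) a b| / r j) * r i < c * r i := by
        apply mul_lt_mul_of_pos_right _ (hr i)
        rw [hc]; linarith
      linarith
    | succ n ih =>
      obtain ⟨hE, hd⟩ := ih
      have hrpos : ∀ i, 0 < α ^ n * c * r i :=
        fun i => mul_pos (mul_pos (pow_pos hα0 n) hcpos) (hr i)
      have hmem : (T^[n] a, T^[n] b) ∈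
          scaledEnt (fun i => F (f i)) (fun i => α ^ n * c * r i) 1 ∩ E := by
        refine ⟨?_, hE⟩
        simp only [scaledEnt, VEnt, Set.mem_iInter, Set.mem_setOf_eq, one_mul]
        exact hd
      have hstep := hT.2 m f (fun i => α ^ n * c * r i) hrpos _ _ hmem
      constructor
      · rw [Function.iterate_succ_apply', Function.iterate_succ_apply']
        exact hT.1 _ _ hE
      · intro i
        have h := Set.mem_iInter.1 hstep i
        simp only [VEnt, Set.mem_setOf_eq] at h
        rw [Function.iterate_succ_apply', Function.iterate_succ_apply']
        calc F (f i) (T (T^[n] a)) (T (T^[n] b)) < α * (α ^ n * c * r i) := h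
        _ = α ^ (n + 1) * c * r i := by ring
  exact fun n i => (key n).2 i

theorem stmt5 {X ι : Type*} (F : ι → X → X → ℝ) (hF : ∀ i, IsPseudoMetric (F i))
    (E : Set (X × X)) (hloop : ∀ x : X, (x, x) ∈ E)
    (T : X → X) (α : ℝ) (hα0 : 0 < α) (hα1 : α < 1)
    (hT : BanachGContraction F E T α) :
    ∀ x y : X, y ∈ component E x →
      ∀ (m : ℕ) (f : Fin m → ι) (r : Fin m → ℝ), (∀ i, 0 < r i) →
        ∃ c : ℝ, 0 < c ∧ ∀ n : ℕ, 1 ≤ n →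
          (T^[n] x, T^[n] y) ∈ scaledEnt (fun i => F (f i)) r (α ^ n * c) := by
  intro x y hy m f r hr
  induction hy with
  | refl =>
    refine ⟨1, one_pos, fun n _ => ?_⟩
    simp only [scaledEnt, VEnt, Set.mem_iInter, Set.mem_setOf_eq]
    intro i
    rw [(hF (f i)).1]
    exact mul_pos (mul_pos (pow_pos hα0 n) one_pos) (hr i)
  | @tail b z hxb hbz ih =>
    obtain ⟨c1, hc1, h1⟩ := ih
    have hedge : ∃ c : ℝ, 0 < c ∧ ∀ n : ℕ, ∀ i,
        F (f i) (T^[n] b) (T^[n] z) < α ^ n * c * r i := by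
      rcases hbz with h | h
      · exact edge_bound F hF E T α hα0 hT m f r hr b z h
      · obtain ⟨c, hc, hh⟩ := edge_bound F hF E T α hα0 hT m f r hr z b h
        exact ⟨c, hc, fun n i => by rw [(hF (f i)).2.1]; exact hh n i⟩
    obtain ⟨c2, hc2, h2⟩ := hedge
    refine ⟨c1 + c2, by linarith, fun n hn => ?_⟩
    have hx := h1 n hn
    simp only [scaledEnt, VEnt, Set.mem_iInter, Set.mem_setOf_eq] at hx ⊢
    intro i
    have ht := (hF (f i)).2.2 (T^[n] x) (T^[n] b) (T^[n] z)
    have h2' := h2 n i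
    nlinarith [hx i, (hr i).le, pow_pos hα0 n]
end

section
/- Let $X$ be a uniform space with graph $G$ (containing all loops). If $G$ is weakly connected, then for every Banach $G$-contraction $T : X \to X$ and every $x \in X$, the sequence of Picard iterates $\{T^n x\}$ is a Cauchy sequence in $X$. -/
open Filter Topology Set

theorem stmt6 {X ι : Type*} [UniformSpace X] (F : ι → X → X → ℝ)
    (hgen : GeneratesUniformity F)
    (E : Set (X × X)) (hloop : ∀ x : X, (x, x) ∈ E)
    (hconn : ∀ a b : X, Relation.ReflTransGen (symRel E) a b)
    (T : X → X) (α : ℝ) (hα0 : 0 < α) (hα1 : α < 1)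
    (hT : BanachGContraction F E T α) :
    ∀ x : X, CauchySeq (fun n : ℕ => T^[n] x) := by
  intro x
  obtain ⟨hpm, hV, hbase⟩ := hgen
  have h1α : (0:ℝ) < 1 - α := by linarith
  have hrefl : ∀ i (a : X), F i a a = 0 := fun i => (hpm i).1
  have hsymm : ∀ i (a b : X), F i a b = F i b a := fun i => (hpm i).2.1
  have htri : ∀ i (a b c : X), F i a c ≤ F i a b + F i b c := fun i => (hpm i).2.2
  have hnonneg : ∀ i (a b : X), 0 ≤ F i a b := by
    intro i a b
    have h := htri i a b a
    rw [hrefl, hsymm i b a] at h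
    linarith
  have hcontr : ∀ a b : X, (a, b) ∈ E → ∀ i, F i (T a) (T b) ≤ α * F i a b := by
    intro a b hab i
    refine le_of_forall_pos_le_add ?_
    intro ε hε
    have hr : 0 < F i a b + ε / α := by
      have := hnonneg i a b
      have := div_pos hε hα0
      linarith
    have hmem : (a, b) ∈ scaledEnt (fun _ : Fin 1 => F i) (fun _ => F i a b + ε / α) 1 ∩ E := by
      constructor
      · simp only [scaledEnt, VEnt, Set.mem_iInter, Set.mem_setOf_eq, one_mul]
        intro _
        have := div_pos hε hα0
        linarith
      · exact hab
    have hc := hT.2 1 (fun _ => i) (fun _ => F i a b + ε / α) (fun _ => hr) a b hmem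
    simp only [scaledEnt, VEnt, Set.mem_iInter, Set.mem_setOf_eq] at hc
    have h0 := hc 0
    have heq : α * (F i a b + ε / α) = α * F i a b + ε := by
      field_simp
    linarith
  have hedge : ∀ n (a b : X), (a, b) ∈ E → (T^[n] a, T^[n] b) ∈ E := by
    intro n
    induction n with
    | zero => intro a b h; exact h
    | succ n ih =>
      intro a b h
      rw [Function.iterate_succ_apply', Function.iterate_succ_apply']
      exact hT.1 _ _ (ih a b h)
  have hiter : ∀ (a b : X), (a, b) ∈ E → ∀ n i, F i (T^[n] a) (T^[n] b) ≤ α ^ n * F i a b := by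
    intro a b hab n i
    induction n with
    | zero => simp
    | succ n ih =>
      rw [Function.iterate_succ_apply', Function.iterate_succ_apply']
      calc F i (T (T^[n] a)) (T (T^[n] b)) ≤ α * F i (T^[n] a) (T^[n] b) :=
            hcontr _ _ (hedge n a b hab) i
        _ ≤ α * (α ^ n * F i a b) := by nlinarith
        _ = α ^ (n + 1) * F i a b := by ring
  have hchain : ∀ (a b : X), Relation.ReflTransGen (symRel E) a b →
      ∀ i, ∃ C : ℝ, 0 ≤ C ∧ ∀ n, F i (T^[n] a) (T^[n] b) ≤ α ^ n * C := by
    intro a b hab i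
    induction hab with
    | refl => exact ⟨0, le_refl 0, fun n => by simp [hrefl]⟩
    | @tail b c hab hbc ih =>
      obtain ⟨C, hC0, hC⟩ := ih
      rcases hbc with h | h
      · refine ⟨C + F i b c, by have := hnonneg i b c; linarith, fun n => ?_⟩
        calc F i (T^[n] a) (T^[n] c)
            ≤ F i (T^[n] a) (T^[n] b) + F i (T^[n] b) (T^[n] c) := htri _ _ _ _
          _ ≤ α ^ n * C + α ^ n * F i b c := add_le_add (hC n) (hiter b c h n i)
          _ = α ^ n * (C + F i b c) := by ring
      · refine ⟨C + F i c b, by have := hnonneg i c b; linarith, fun n => ?_⟩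
        calc F i (T^[n] a) (T^[n] c)
            ≤ F i (T^[n] a) (T^[n] b) + F i (T^[n] b) (T^[n] c) := htri _ _ _ _
          _ ≤ α ^ n * C + α ^ n * F i c b := by
              have := hiter c b h n i
              rw [hsymm i (T^[n] b) (T^[n] c)]
              exact add_le_add (hC n) this
          _ = α ^ n * (C + F i c b) := by ring
  choose C hC0 hC using fun i => hchain x (T x) (hconn x (T x)) i
  have hstep : ∀ i n, F i (T^[n] x) (T^[n + 1] x) ≤ α ^ n * C i := by
    intro i n
    rw [Function.iterate_succ_apply]
    exact hC i n
  have hgeo : ∀ i k n, F i (T^[n] x) (T^[n + k] x) ≤ α ^ n * C i * (1 - α)⁻¹ := by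
    intro i k
    induction k with
    | zero =>
      intro n
      simp only [Nat.add_zero, hrefl]
      have := mul_nonneg (mul_nonneg (pow_nonneg hα0.le n) (hC0 i)) (inv_nonneg.2 h1α.le)
      linarith
    | succ k ih =>
      intro n
      have h1 : n + (k + 1) = (n + 1) + k := by ring
      rw [h1]
      calc F i (T^[n] x) (T^[(n + 1) + k] x)
          ≤ F i (T^[n] x) (T^[n + 1] x) + F i (T^[n + 1] x) (T^[(n + 1) + k] x) := htri _ _ _ _
        _ ≤ α ^ n * C i + α ^ (n + 1) * C i * (1 - α)⁻¹ := add_le_add (hstep i n) (ih (n + 1))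
        _ = α ^ n * C i * (1 - α)⁻¹ := by
            field_simp
            ring
  rw [cauchySeq_iff]
  intro U hU
  obtain ⟨m, f, r, hr, hsub⟩ := hbase U hU
  have hev : ∀ᶠ n in atTop, ∀ i : Fin m, α ^ n * C (f i) * (1 - α)⁻¹ < r i := by
    rw [eventually_all]
    intro i
    have htend : Tendsto (fun n : ℕ => α ^ n * C (f i) * (1 - α)⁻¹) atTop (𝓝 0) := by
      have h := (tendsto_pow_atTop_nhds_zero_of_lt_one hα0.le hα1).mul_const
        (C (f i) * (1 - α)⁻¹)
      simpa [mul_assoc] using h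
    exact htend.eventually_lt_const (hr i)
  obtain ⟨N, hN⟩ := eventually_atTop.mp hev
  refine ⟨N, fun k hk l hl => hsub ?_⟩
  simp only [scaledEnt, VEnt, Set.mem_iInter, Set.mem_setOf_eq, one_mul]
  intro i
  rcases le_total k l with h | h
  · obtain ⟨d, rfl⟩ : ∃ d, l = k + d := ⟨l - k, (Nat.add_sub_cancel' h).symm⟩
    calc F (f i) (T^[k] x) (T^[k + d] x) ≤ α ^ k * C (f i) * (1 - α)⁻¹ := hgeo (f i) d k
      _ < r i := hN k hk i
  · obtain ⟨d, rfl⟩ : ∃ d, k = l + d := ⟨k - l, (Nat.add_sub_cancel' h).symm⟩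
    rw [hsymm]
    calc F (f i) (T^[l] x) (T^[l + d] x) ≤ α ^ l * C (f i) * (1 - α)⁻¹ := hgeo (f i) d l
      _ < r i := hN l hl i
end

section
/- Let $X$ be a uniform space with weakly connected graph $G$. Then for every Banach $G$-contraction $T : X \to X$ and all $x, y \in X$, the sequences $\{T^n x\}$ and $\{T^n y\}$ are Cauchy equivalent: both are Cauchy and for every entourage $U$ there exists $N$ with $(T^n x, T^n y) \in U$ for all $n \ge N$. -/
open Filter Topology Set

theorem stmt7 {X ι : Type*} [UniformSpace X] (F : ι → X → X → ℝ)
    (hgen : GeneratesUniformity F)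
    (E : Set (X × X)) (hloop : ∀ x : X, (x, x) ∈ E)
    (hconn : ∀ a b : X, Relation.ReflTransGen (symRel E) a b)
    (T : X → X) (α : ℝ) (hα0 : 0 < α) (hα1 : α < 1)
    (hT : BanachGContraction F E T α) :
    ∀ x y : X,
      CauchySeq (fun n : ℕ => T^[n] x) ∧ CauchySeq (fun n : ℕ => T^[n] y) ∧
      ∀ U ∈ uniformity X, ∃ N : ℕ, ∀ n ≥ N, (T^[n] x, T^[n] y) ∈ U := by
  obtain ⟨hpm, hent, hbase⟩ := hgen
  have hnonneg : ∀ i x y, 0 ≤ F i x y := by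
    intro i x y
    have h := (hpm i).2.2 x x y
    rw [(hpm i).1] at h
    have h2 := (hpm i).2.2 x y x
    rw [(hpm i).1, (hpm i).2.1 y x] at h2
    linarith
  have hE : ∀ (n : ℕ) (x y : X), (x, y) ∈ E → (T^[n] x, T^[n] y) ∈ E := by
    intro n
    induction n with
    | zero => simp
    | succ n ih =>
      intro x y h
      rw [Function.iterate_succ_apply', Function.iterate_succ_apply']
      exact hT.1 _ _ (ih x y h)
  have hA : ∀ i (x y : X), (x, y) ∈ E → F i (T x) (T y) ≤ α * F i x y := by
    intro i x y hxy
    by_contra hcon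
    push_neg at hcon
    set ε := (F i (T x) (T y) - α * F i x y) / α with hεdef
    have hεpos : 0 < ε := div_pos (by linarith) hα0
    have hrpos : ∀ j : Fin 1, 0 < (fun _ : Fin 1 => F i x y + ε) j := by
      intro j
      have := hnonneg i x y
      simp only
      linarith
    have hmem : (x, y) ∈ scaledEnt (fun _ : Fin 1 => F i) (fun _ => F i x y + ε) 1 ∩ E := by
      refine ⟨Set.mem_iInter.2 fun j => ?_, hxy⟩
      simp only [VEnt, Set.mem_setOf_eq, one_mul]
      linarith
    have h2 := hT.2 1 (fun _ => i) (fun _ => F i x y + ε) hrpos x y hmem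
    have h3 := Set.mem_iInter.1 h2 0
    simp only [VEnt, Set.mem_setOf_eq] at h3
    have hεeq : α * ε = F i (T x) (T y) - α * F i x y := by
      rw [hεdef]
      field_simp
    rw [mul_add] at h3
    linarith
  have hA' : ∀ i (x y : X), (x, y) ∈ E → ∀ n, F i (T^[n] x) (T^[n] y) ≤ α ^ n * F i x y := by
    intro i x y hxy n
    induction n with
    | zero => simp
    | succ n ih =>
      rw [Function.iterate_succ_apply', Function.iterate_succ_apply']
      calc F i (T (T^[n] x)) (T (T^[n] y)) ≤ α * F i (T^[n] x) (T^[n] y) :=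
            hA i _ _ (hE n x y hxy)
        _ ≤ α * (α ^ n * F i x y) := by
            have := ih
            nlinarith
        _ = α ^ (n + 1) * F i x y := by ring
  have hsym : ∀ i (x y : X), symRel E x y → ∀ n, F i (T^[n] x) (T^[n] y) ≤ α ^ n * F i x y := by
    intro i x y hxy n
    rcases hxy with h | h
    · exact hA' i x y h n
    · rw [(hpm i).2.1, (hpm i).2.1 x y]
      exact hA' i y x h n
  have hB : ∀ (x y : X) (i : ι), ∃ C, 0 ≤ C ∧ ∀ n, F i (T^[n] x) (T^[n] y) ≤ α ^ n * C := by
    intro x y i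
    induction hconn x y with
    | refl => exact ⟨0, le_rfl, fun n => by simp [(hpm i).1]⟩
    | @tail b c hb hbc ih =>
      obtain ⟨C, hC0, hC⟩ := ih
      refine ⟨C + F i b c, by have := hnonneg i b c; linarith, fun n => ?_⟩
      calc F i (T^[n] x) (T^[n] c)
          ≤ F i (T^[n] x) (T^[n] b) + F i (T^[n] b) (T^[n] c) := (hpm i).2.2 _ _ _
        _ ≤ α ^ n * C + α ^ n * F i b c := add_le_add (hC n) (hsym i b c hbc n)
        _ = α ^ n * (C + F i b c) := by ring
  have htend : ∀ (C : ℝ), 0 ≤ C → ∀ r : ℝ, 0 < r → ∀ᶠ n in atTop, α ^ n * C < r := by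
    intro C hC r hr
    have h := tendsto_pow_atTop_nhds_zero_of_lt_one hα0.le hα1
    have h2 := (h.mul_const C).eventually (gt_mem_nhds (show (0:ℝ) * C < r by simpa using hr))
    simpa using h2
  have key : ∀ x y : X, ∀ U ∈ uniformity X, ∃ N : ℕ, ∀ n ≥ N, (T^[n] x, T^[n] y) ∈ U := by
    intro x y U hU
    obtain ⟨m, f, r, hr, hsub⟩ := hbase U hU
    choose C hC0 hC using fun j : Fin m => hB x y (f j)
    have hev : ∀ᶠ n in atTop, ∀ j, α ^ n * C j < r j :=
      eventually_all.2 fun j => htend (C j) (hC0 j) (r j) (hr j)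
    obtain ⟨N, hN⟩ := eventually_atTop.1 hev
    refine ⟨N, fun n hn => hsub (Set.mem_iInter.2 fun j => ?_)⟩
    simp only [VEnt, Set.mem_setOf_eq, one_mul]
    exact (hC j n).trans_lt (hN n hn j)
  have h1α : (0:ℝ) < 1 - α := by linarith
  have htel : ∀ (i : ι) (x : X) (C : ℝ), 0 ≤ C →
      (∀ n, F i (T^[n] x) (T^[n + 1] x) ≤ α ^ n * C) →
      ∀ (k p : ℕ), F i (T^[p] x) (T^[p + k] x) ≤ α ^ p * (C / (1 - α)) := by
    intro i x C hC0 hstep k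
    induction k with
    | zero =>
      intro p
      simp only [Nat.add_zero, (hpm i).1]
      positivity
    | succ k ih =>
      intro p
      have h1 := hstep p
      have h2 := ih (p + 1)
      have htri := (hpm i).2.2 (T^[p] x) (T^[p + 1] x) (T^[p + 1 + k] x)
      have hre : p + (k + 1) = p + 1 + k := by ring
      rw [hre]
      have heq : α ^ p * C + α ^ (p + 1) * (C / (1 - α)) = α ^ p * (C / (1 - α)) := by
        rw [pow_succ]
        field_simp
        ring
      linarith
  have hCauchy : ∀ x : X, CauchySeq (fun n : ℕ => T^[n] x) := by
    intro x
    rw [cauchySeq_iff]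
    intro U hU
    obtain ⟨m, f, r, hr, hsub⟩ := hbase U hU
    choose C hC0 hC using fun j : Fin m => hB x (T x) (f j)
    have hstep : ∀ j n, F (f j) (T^[n] x) (T^[n + 1] x) ≤ α ^ n * C j := by
      intro j n
      rw [Function.iterate_succ_apply]
      exact hC j n
    have hev : ∀ᶠ n in atTop, ∀ j, α ^ n * (C j / (1 - α)) < r j :=
      eventually_all.2 fun j =>
        htend (C j / (1 - α)) (div_nonneg (hC0 j) h1α.le) (r j) (hr j)
    obtain ⟨N, hN⟩ := eventually_atTop.1 hev
    refine ⟨N, fun k hk l hl => hsub (Set.mem_iInter.2 fun j => ?_)⟩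
    simp only [VEnt, Set.mem_setOf_eq, one_mul]
    rcases le_total k l with h | h
    · obtain ⟨d, rfl⟩ := Nat.exists_eq_add_of_le h
      exact (htel (f j) x (C j) (hC0 j) (hstep j) d k).trans_lt (hN k hk j)
    · obtain ⟨d, rfl⟩ := Nat.exists_eq_add_of_le h
      rw [(hpm (f j)).2.1]
      exact (htel (f j) x (C j) (hC0 j) (hstep j) d l).trans_lt (hN l hl j)
  intro x y
  exact ⟨hCauchy x, hCauchy y, key x y⟩
end

section
/- Let $X$ be a uniform space and $G$ a graph on $X$ containing all loops. If $G$ is not weakly connected, then there exists a Banach $G$-contraction $T : X \to X$ with at least two distinct fixed points. (Equivalently: if every Banach $G$-contraction has at most one fixed point, then $G$ is weakly connected.) -/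
open Filter Topology Set

theorem stmt9 {X ι : Type*} (F : ι → X → X → ℝ) (hF : ∀ i, IsPseudoMetric (F i))
    (E : Set (X × X)) (hloop : ∀ x : X, (x, x) ∈ E)
    (hnc : ¬ ∀ a b : X, Relation.ReflTransGen (symRel E) a b) :
    ∃ (T : X → X) (α : ℝ), 0 < α ∧ α < 1 ∧ BanachGContraction F E T α ∧
      ∃ a b : X, a ≠ b ∧ T a = a ∧ T b = b := by
  push_neg at hnc
  obtain ⟨a, b, hab⟩ := hnc
  classical
  set C : Set X := component E a with hC
  have haC : a ∈ C := Relation.ReflTransGen.refl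
  have hbC : b ∉ C := hab
  refine ⟨fun x => if x ∈ C then a else b, 1/2, by norm_num, by norm_num, ⟨?_, ?_⟩,
    a, b, fun h => hbC (h ▸ haC), by simp [haC], by simp [hbC]⟩
  · intro x y hxy
    have hsame : (x ∈ C) ↔ (y ∈ C) := by
      constructor
      · intro hx; exact hx.tail (Or.inl hxy)
      · intro hy; exact hy.tail (Or.inr hxy)
    by_cases hx : x ∈ C
    · simp [hx, hsame.mp hx, hloop]
    · have hy : y ∉ C := fun h => hx (hsame.mpr h)
      simp [hx, hy, hloop]
  · intro m f r hr x y ⟨_, hxy⟩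
    have hsame : (x ∈ C) ↔ (y ∈ C) := by
      constructor
      · intro hx; exact hx.tail (Or.inl hxy)
      · intro hy; exact hy.tail (Or.inr hxy)
    have hTeq : (if x ∈ C then a else b) = (if y ∈ C then a else b) := by
      by_cases hx : x ∈ C
      · simp [hx, hsame.mp hx]
      · have hy : y ∉ C := fun h => hx (hsame.mpr h)
        simp [hx, hy]
    simp only [scaledEnt, Set.mem_iInter, VEnt, Set.mem_setOf_eq]
    intro i
    rw [hTeq, (hF (f i)).1]
    have := hr i
    linarith
end

section
/- Let $T : X \to X$ be a Banach $G$-contraction on a uniform space $X$ with graph $G$, and let $x_0 \in X$ satisfy $T x_0 \in [x_0]_{\widetilde{G}}$. Then the component $[x_0]_{\widetilde{G}}$ is $T$-invariant, and $T$ restricted to $[x_0]_{\widetilde{G}}$ is a Banach $\widetilde{G}_{x_0}$-contraction, where $\widetilde{G}_{x_0}$ is the component subgraph of $\widetilde{G}$ containing $x_0$. -/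
open Filter Topology Set

/-! Reversing an edge of `G̃` keeps it in `G̃`, and symmetric pseudometrics make every basic
entourage symmetric, so the contraction estimate transfers from `G` to `G̃`. Since `T` maps
`G̃`-edges to `G̃`-edges it maps `G̃`-paths to `G̃`-paths, hence `[x₀]` into `[T x₀] = [x₀]`. -/

section

variable {X ι : Type*}

theorem symRel_map {E : Set (X × X)} {T : X → X} (hE : ∀ x y, (x, y) ∈ E → (T x, T y) ∈ E)
    {a b : X} (h : symRel E a b) : symRel E (T a) (T b) :=
  h.imp (hE a b) (hE b a)

theorem mapsTo_component {E : Set (X × X)} {T : X → X}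
    (hE : ∀ x y, (x, y) ∈ E → (T x, T y) ∈ E) {x0 : X} (hx0 : T x0 ∈ component E x0) :
    MapsTo T (component E x0) (component E x0) := fun _ hy =>
  Relation.ReflTransGen.trans hx0 (Relation.ReflTransGen.lift T (fun _ _ => symRel_map hE) _ _ hy)

theorem swap_mem_scaledEnt {m : ℕ} {ρ : Fin m → X → X → ℝ} (hρ : ∀ i x y, ρ i x y = ρ i y x)
    {r : Fin m → ℝ} {β : ℝ} {a b : X} (h : (a, b) ∈ scaledEnt ρ r β) :
    (b, a) ∈ scaledEnt ρ r β := by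
  simp only [scaledEnt, VEnt, mem_iInter, mem_ofPred_eq] at h ⊢
  exact fun i => hρ i a b ▸ h i

theorem BanachGContraction.symEdges {F : ι → X → X → ℝ} (hF : ∀ i x y, F i x y = F i y x)
    {E : Set (X × X)} {T : X → X} {α : ℝ} (hT : BanachGContraction F E T α) :
    BanachGContraction F (symEdges E) T α := by
  refine ⟨fun x y h => symRel_map hT.1 h, fun m f r hr x y ⟨hV, hxy⟩ => ?_⟩
  have hρ : ∀ i a b, F (f i) a b = F (f i) b a := fun i => hF (f i)
  rcases hxy with hxy | hyx
  · exact hT.2 m f r hr x y ⟨hV, hxy⟩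
  · exact swap_mem_scaledEnt hρ (hT.2 m f r hr y x ⟨swap_mem_scaledEnt hρ hV, hyx⟩)

theorem BanachGContraction.inter_prod {F : ι → X → X → ℝ} {E : Set (X × X)} {T : X → X}
    {α : ℝ} (hT : BanachGContraction F E T α) {S : Set X} (hS : MapsTo T S S) :
    BanachGContraction F (E ∩ S ×ˢ S) T α :=
  ⟨fun x y ⟨hxy, hx, hy⟩ => ⟨hT.1 x y hxy, hS hx, hS hy⟩,
    fun m f r hr x y ⟨hV, hxy, _⟩ => hT.2 m f r hr x y ⟨hV, hxy⟩⟩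

end

theorem stmt11_general {X ι : Type*} (F : ι → X → X → ℝ) (hF : ∀ i, IsPseudoMetric (F i))
    (E : Set (X × X))
    (T : X → X) (α : ℝ)
    (hT : BanachGContraction F E T α)
    (x0 : X) (hx0 : T x0 ∈ component E x0) :
    (∀ y ∈ component E x0, T y ∈ component E x0) ∧
    BanachGContraction F (symEdges E ∩ (component E x0 ×ˢ component E x0)) T α :=
  have hinv := mapsTo_component hT.1 hx0
  ⟨hinv, (hT.symEdges fun i => (hF i).2.1).inter_prod hinv⟩

theorem stmt11 {X ι : Type*} (F : ι → X → X → ℝ) (hF : ∀ i, IsPseudoMetric (F i))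
    (E : Set (X × X)) (hloop : ∀ x : X, (x, x) ∈ E)
    (T : X → X) (α : ℝ) (hα0 : 0 < α) (hα1 : α < 1)
    (hT : BanachGContraction F E T α)
    (x0 : X) (hx0 : T x0 ∈ component E x0) :
    (∀ y ∈ component E x0, T y ∈ component E x0) ∧
    BanachGContraction F (symEdges E ∩ (component E x0 ×ˢ component E x0)) T α :=
  stmt11_general F hF E T α hT x0 hx0
end

section
/- Let $X$ be a sequentially complete separated uniform space with graph $G$ satisfying property $(\ast)$: whenever a sequence $\{x_n\}$ converges to $x$ and $(x_n, x_{n+1}) \in E(G)$ for all $n$, there is a subsequence $\{x_{n_k}\}$ with $(x_{n_k}, x) \in E(G)$ for all $k$. Then for every Banach $G$-contraction $T$ and every $x$ with $(x, Tx) \in E(G)$, the restriction of $T$ to $[x]_{\widetilde{G}}$ is a Picard operator: it has a unique fixed point $x^* \in [x]_{\widetilde{G}}$ and $T^n y \to x^*$ for all $y \in [x]_{\widetilde{G}}$. -/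
open Filter Topology Set

theorem stmt12 {X ι : Type*} [UniformSpace X] (F : ι → X → X → ℝ)
    (hgen : GeneratesUniformity F)
    (hsep : ∀ x y : X, (∀ U ∈ uniformity X, (x, y) ∈ U) → x = y)
    (hcomp : ∀ u : ℕ → X, CauchySeq u → ∃ z : X, Tendsto u atTop (nhds z))
    (E : Set (X × X)) (hloop : ∀ x : X, (x, x) ∈ E)
    (hstar : ∀ (u : ℕ → X) (z : X), Tendsto u atTop (nhds z) →
      (∀ n : ℕ, (u n, u (n + 1)) ∈ E) →
      ∃ φ : ℕ → ℕ, StrictMono φ ∧ ∀ k : ℕ, (u (φ k), z) ∈ E)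
    (T : X → X) (α : ℝ) (hα0 : 0 < α) (hα1 : α < 1)
    (hT : BanachGContraction F E T α)
    (x : X) (hx : (x, T x) ∈ E) :
    ∃ xs ∈ component E x, T xs = xs ∧
      (∀ y ∈ component E x, T y = y → y = xs) ∧
      ∀ y ∈ component E x, Tendsto (fun n : ℕ => T^[n] y) atTop (nhds xs) := by
  obtain ⟨hpm, hent, hbase⟩ := hgen
  have hd0 : ∀ i a, F i a a = 0 := fun i => (hpm i).1
  have hdsymm : ∀ i a b, F i a b = F i b a := fun i => (hpm i).2.1
  have hdtri : ∀ i a b c, F i a c ≤ F i a b + F i b c := fun i => (hpm i).2.2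
  have hnn : ∀ i a b, 0 ≤ F i a b := by
    intro i a b
    have h1 := hdtri i a b a
    rw [hd0, hdsymm i b a] at h1
    linarith
  have hE : ∀ a b, (a, b) ∈ E → (T a, T b) ∈ E := hT.1
  -- pointwise contraction on each pseudometric
  have hcontr : ∀ i a b, (a, b) ∈ E → F i (T a) (T b) ≤ α * F i a b := by
    intro i a b hab
    have key : ∀ ε : ℝ, 0 < ε → F i (T a) (T b) < α * (F i a b + ε) := by
      intro ε hε
      have hr : ∀ j : Fin 1, (0:ℝ) < (fun _ : Fin 1 => F i a b + ε) j := by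
        intro j
        show (0:ℝ) < F i a b + ε
        have := hnn i a b
        linarith
      have hmem : (a, b) ∈ scaledEnt (fun _ : Fin 1 => F i) (fun _ => F i a b + ε) 1 ∩ E := by
        refine ⟨?_, hab⟩
        simp only [scaledEnt, VEnt, Set.mem_iInter, Set.mem_setOf_eq, one_mul]
        intro j; linarith
      have := hT.2 1 (fun _ => i) (fun _ => F i a b + ε) hr a b hmem
      simp only [scaledEnt, VEnt, Set.mem_iInter, Set.mem_setOf_eq] at this
      exact this 0
    by_contra h
    push_neg at h
    have h1 := key ((F i (T a) (T b) - α * F i a b) / (2 * α))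
      (div_pos (by linarith) (by linarith))
    have : α * ((F i (T a) (T b) - α * F i a b) / (2 * α)) =
        (F i (T a) (T b) - α * F i a b) / 2 := by field_simp
    nlinarith
  have hEit : ∀ a b, (a, b) ∈ E → ∀ n, (T^[n] a, T^[n] b) ∈ E := by
    intro a b hab n
    induction n with
    | zero => simpa using hab
    | succ n ih =>
      rw [Function.iterate_succ_apply', Function.iterate_succ_apply']
      exact hE _ _ ih
  have hit : ∀ i a b, (a, b) ∈ E → ∀ n, F i (T^[n] a) (T^[n] b) ≤ α ^ n * F i a b := by
    intro i a b hab n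
    induction n with
    | zero => simp
    | succ n ih =>
      rw [Function.iterate_succ_apply', Function.iterate_succ_apply', pow_succ]
      have h1 := hcontr i (T^[n] a) (T^[n] b) (hEit a b hab n)
      nlinarith [hnn i (T^[n] a) (T^[n] b)]
  -- path bound on components
  have hpath : ∀ y, Relation.ReflTransGen (symRel E) x y → ∀ i, ∃ C, 0 ≤ C ∧
      ∀ n, F i (T^[n] x) (T^[n] y) ≤ α ^ n * C := by
    intro y hy i
    induction hy with
    | refl => exact ⟨0, le_rfl, fun n => by simp [hd0]⟩
    | @tail b c hxb hbc ih =>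
      obtain ⟨C, hC0, hC⟩ := ih
      refine ⟨C + max (F i b c) (F i c b), add_nonneg hC0 ((hnn i b c).trans (le_max_left _ _)), fun n => ?_⟩
      have htri := hdtri i (T^[n] x) (T^[n] b) (T^[n] c)
      have hbc' : F i (T^[n] b) (T^[n] c) ≤ α ^ n * max (F i b c) (F i c b) := by
        rcases hbc with h | h
        · calc F i (T^[n] b) (T^[n] c) ≤ α ^ n * F i b c := hit i b c h n
            _ ≤ α ^ n * max (F i b c) (F i c b) := by
              apply mul_le_mul_of_nonneg_left (le_max_left _ _) (pow_nonneg hα0.le n)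
        · calc F i (T^[n] b) (T^[n] c) = F i (T^[n] c) (T^[n] b) := hdsymm _ _ _
            _ ≤ α ^ n * F i c b := hit i c b h n
            _ ≤ α ^ n * max (F i b c) (F i c b) := by
              apply mul_le_mul_of_nonneg_left (le_max_right _ _) (pow_nonneg hα0.le n)
      calc F i (T^[n] x) (T^[n] c) ≤ F i (T^[n] x) (T^[n] b) + F i (T^[n] b) (T^[n] c) := htri
        _ ≤ α ^ n * C + α ^ n * max (F i b c) (F i c b) := add_le_add (hC n) hbc'
        _ = α ^ n * (C + max (F i b c) (F i c b)) := by ring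
  set u : ℕ → X := fun n => T^[n] x with hu
  have huE : ∀ n, (u n, u (n + 1)) ∈ E := by
    intro n
    have h1 : u (n + 1) = T^[n] (T x) := Function.iterate_succ_apply T n x
    rw [h1]
    exact hEit x (T x) hx n
  have hstep : ∀ i n, F i (u n) (u (n + 1)) ≤ α ^ n * F i x (T x) := by
    intro i n
    have h1 : u (n + 1) = T^[n] (T x) := Function.iterate_succ_apply T n x
    rw [h1]
    exact hit i x (T x) hx n
  have h1α : (0:ℝ) < 1 - α := by linarith
  -- telescoping bound
  have htel : ∀ i k p, (1 - α) * F i (u k) (u (k + p)) ≤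
      α ^ k * F i x (T x) - α ^ (k + p) * F i x (T x) := by
    intro i k p
    induction p with
    | zero => simp [hd0]
    | succ p ih =>
      have htri := hdtri i (u k) (u (k + p)) (u (k + p + 1))
      have h2 := hstep i (k + p)
      have hps : α ^ (k + p + 1) = α ^ (k + p) * α := pow_succ α (k + p)
      have hix : k + (p + 1) = k + p + 1 := by ring
      rw [hix, hps]
      nlinarith [pow_nonneg hα0.le (k + p)]
  have hbound : ∀ i k l, k ≤ l → F i (u k) (u l) ≤ α ^ k * F i x (T x) / (1 - α) := by
    intro i k l hkl
    obtain ⟨p, rfl⟩ := Nat.exists_eq_add_of_le hkl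
    have h1 := htel i k p
    have h2 : 0 ≤ α ^ (k + p) * F i x (T x) :=
      mul_nonneg (pow_nonneg hα0.le _) (hnn _ _ _)
    rw [le_div_iff₀ h1α]
    nlinarith
  -- Cauchy
  have hcau : CauchySeq u := by
    rw [cauchySeq_iff]
    intro U hU
    obtain ⟨m, f, r, hr, hsub⟩ := hbase U hU
    have hev : ∀ᶠ N in atTop, ∀ j : Fin m, α ^ N * F (f j) x (T x) / (1 - α) < r j := by
      rw [eventually_all]
      intro j
      have h1 : Tendsto (fun N : ℕ => α ^ N * F (f j) x (T x) / (1 - α)) atTop (𝓝 0) := by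
        have := (tendsto_pow_atTop_nhds_zero_of_lt_one hα0.le hα1).mul_const
          (F (f j) x (T x) / (1 - α))
        simpa [mul_div_assoc] using this
      exact h1.eventually_lt_const (hr j)
    obtain ⟨N, hN⟩ := hev.exists
    refine ⟨N, fun k hk l hl => ?_⟩
    apply hsub
    simp only [scaledEnt, VEnt, Set.mem_iInter, Set.mem_setOf_eq, one_mul]
    intro j
    have hmono : ∀ k', N ≤ k' → α ^ k' ≤ α ^ N :=
      fun k' h => pow_le_pow_of_le_one hα0.le hα1.le h
    have hnum : ∀ k' l', N ≤ k' → k' ≤ l' → F (f j) (u k') (u l') < r j := by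
      intro k' l' h1 h2
      calc F (f j) (u k') (u l') ≤ α ^ k' * F (f j) x (T x) / (1 - α) := hbound _ _ _ h2
        _ ≤ α ^ N * F (f j) x (T x) / (1 - α) := by
          have hmm := mul_le_mul_of_nonneg_right (hmono k' h1) (hnn (f j) x (T x))
          gcongr
        _ < r j := hN j
    rcases le_total k l with h | h
    · exact hnum k l hk h
    · rw [hdsymm]; exact hnum l k hl h
  obtain ⟨z, hz⟩ := hcomp u hcau
  -- convergence in pseudometric terms
  have hconvd : ∀ (w : ℕ → X) (c : X), Tendsto w atTop (nhds c) →
      ∀ i, ∀ ε : ℝ, 0 < ε → ∀ᶠ n in atTop, F i (w n) c < ε := by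
    intro w c hw i ε hε
    have h : Tendsto (fun n => (w n, c)) atTop (uniformity X) :=
      (Uniform.tendsto_nhds_left).1 hw
    have := h.eventually (eventually_mem_set.2 (hent i ε hε))
    simpa [VEnt] using this
  have hconvd' : ∀ (w : ℕ → X) (c : X),
      (∀ i, ∀ ε : ℝ, 0 < ε → ∀ᶠ n in atTop, F i (w n) c < ε) →
      Tendsto w atTop (nhds c) := by
    intro w c h
    rw [Uniform.tendsto_nhds_left]
    intro U hU
    rw [Filter.mem_map]
    obtain ⟨m, f, r, hr, hsub⟩ := hbase U hU
    have hev : ∀ᶠ n in atTop, ∀ j : Fin m, F (f j) (w n) c < r j :=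
      eventually_all.2 fun j => h (f j) (r j) (hr j)
    filter_upwards [hev] with n hn
    apply hsub
    simp only [scaledEnt, VEnt, Set.mem_iInter, Set.mem_setOf_eq, one_mul]
    exact hn
  have hsep0 : ∀ a b : X, (∀ i, F i a b = 0) → a = b := by
    intro a b h
    apply hsep
    intro U hU
    obtain ⟨m, f, r, hr, hsub⟩ := hbase U hU
    apply hsub
    simp only [scaledEnt, VEnt, Set.mem_iInter, Set.mem_setOf_eq, one_mul]
    intro j; rw [h]; exact hr j
  obtain ⟨φ, hφ, hφE⟩ := hstar u z hz huE
  have hucomp : ∀ n, u n ∈ component E x := by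
    intro n
    induction n with
    | zero => exact Relation.ReflTransGen.refl
    | succ n ih => exact ih.tail (Or.inl (huE n))
  have hzcomp : z ∈ component E x := (hucomp (φ 0)).tail (Or.inl (hφE 0))
  -- fixed point
  have hzfix : T z = z := by
    apply hsep0
    intro i
    by_contra hne
    have hpos : 0 < F i (T z) z := lt_of_le_of_ne (hnn _ _ _) (Ne.symm hne)
    set ε := F i (T z) z with hε
    obtain ⟨N, hN⟩ := (hconvd u z hz i (ε / 2) (by positivity)).exists_forall_of_atTop
    have hk1 : N ≤ φ N := hφ.le_apply
    have hk2 : N ≤ φ N + 1 := hk1.trans (Nat.le_succ _)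
    have h1 : F i (T (u (φ N))) (T z) ≤ α * F i (u (φ N)) z := hcontr i _ _ (hφE N)
    have hTu : T (u (φ N)) = u (φ N + 1) := (Function.iterate_succ_apply' T (φ N) x).symm
    have htri := hdtri i (T z) (T (u (φ N))) z
    have h2 : F i (T z) (T (u (φ N))) = F i (T (u (φ N))) (T z) := hdsymm _ _ _
    have h3 : F i (T (u (φ N))) z = F i (u (φ N + 1)) z := by rw [hTu]
    have h4 := hN (φ N) hk1
    have h5 := hN (φ N + 1) hk2
    nlinarith [hnn i (u (φ N)) z]
  -- main convergence
  have hmain : ∀ y ∈ component E x, Tendsto (fun n : ℕ => T^[n] y) atTop (nhds z) := by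
    intro y hy
    apply hconvd'
    intro i ε hε
    obtain ⟨C, hC0, hC⟩ := hpath y hy i
    have h1 : ∀ᶠ n in atTop, α ^ n * C < ε / 2 := by
      have ht : Tendsto (fun n : ℕ => α ^ n * C) atTop (𝓝 0) := by
        simpa using (tendsto_pow_atTop_nhds_zero_of_lt_one hα0.le hα1).mul_const C
      exact ht.eventually_lt_const (by positivity)
    have h2 : ∀ᶠ n in atTop, F i (u n) z < ε / 2 := hconvd u z hz i (ε / 2) (by positivity)
    filter_upwards [h1, h2] with n h1 h2
    have htri := hdtri i (T^[n] y) (T^[n] x) z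
    have hsy : F i (T^[n] y) (T^[n] x) = F i (T^[n] x) (T^[n] y) := hdsymm _ _ _
    have h3 := hC n
    have : F i (T^[n] x) z = F i (u n) z := rfl
    linarith [htri, h3]
  refine ⟨z, hzcomp, hzfix, ?_, hmain⟩
  intro y hy hyfix
  have hty := hmain y hy
  have hconst : ∀ n : ℕ, T^[n] y = y := Function.iterate_fixed hyfix
  apply hsep0
  intro i
  by_contra hne
  have hpos : 0 < F i y z := lt_of_le_of_ne (hnn _ _ _) (Ne.symm hne)
  obtain ⟨n, hn⟩ := (hconvd (fun n : ℕ => T^[n] y) z hty i (F i y z) hpos).exists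
  rw [hconst n] at hn
  exact absurd hn (lt_irrefl _)
end

section
/- Let $X$ be a sequentially complete separated uniform space with graph $G$ satisfying property $(\ast)$, let $T : X \to X$ be a Banach $G$-contraction, and suppose $X_T = \{x : (x, Tx) \in E(G)\}$ is nonempty and $G$ is weakly connected. Then $T$ is a Picard operator: $T$ has a unique fixed point $x^*$ and $T^n x \to x^*$ for every $x \in X$. -/
open Filter Topology Set

theorem stmt13 {X ι : Type*} [UniformSpace X] (F : ι → X → X → ℝ)
    (hgen : GeneratesUniformity F)
    (hsep : ∀ x y : X, (∀ U ∈ uniformity X, (x, y) ∈ U) → x = y)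
    (hcomp : ∀ u : ℕ → X, CauchySeq u → ∃ z : X, Tendsto u atTop (nhds z))
    (E : Set (X × X)) (hloop : ∀ x : X, (x, x) ∈ E)
    (hstar : ∀ (u : ℕ → X) (z : X), Tendsto u atTop (nhds z) →
      (∀ n : ℕ, (u n, u (n + 1)) ∈ E) →
      ∃ φ : ℕ → ℕ, StrictMono φ ∧ ∀ k : ℕ, (u (φ k), z) ∈ E)
    (hconn : ∀ a b : X, Relation.ReflTransGen (symRel E) a b)
    (T : X → X) (α : ℝ) (hα0 : 0 < α) (hα1 : α < 1)
    (hT : BanachGContraction F E T α)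
    (hXT : ∃ x : X, (x, T x) ∈ E) :
    ∃ xs : X, T xs = xs ∧ (∀ y : X, T y = y → y = xs) ∧
      ∀ x : X, Tendsto (fun n : ℕ => T^[n] x) atTop (nhds xs) := by
  obtain ⟨hpm, hent, hbase⟩ := hgen
  -- pseudometrics are nonnegative
  have hnn : ∀ i (x y : X), 0 ≤ F i x y := by
    intro i x y
    have h1 := (hpm i).2.2 x y x
    have h2 := (hpm i).1 x
    have h3 := (hpm i).2.1 y x
    linarith
  -- pointwise contraction on edges
  have hcontr : ∀ i (x y : X), (x, y) ∈ E → F i (T x) (T y) ≤ α * F i x y := by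
    intro i x y hxy
    have key : ∀ ε > (0:ℝ), F i (T x) (T y) < α * (F i x y + ε) := by
      intro ε hε
      have hr : ∀ j : Fin 1, 0 < (fun _ : Fin 1 => F i x y + ε) j := by
        intro j; have := hnn i x y; simpa using by linarith
      have hmem : (x, y) ∈ scaledEnt (fun j : Fin 1 => F ((fun _ : Fin 1 => i) j))
          (fun _ => F i x y + ε) 1 ∩ E := by
        refine ⟨Set.mem_iInter.2 fun j => ?_, hxy⟩
        show F i x y < 1 * (F i x y + ε)
        linarith
      have := hT.2 1 (fun _ => i) (fun _ => F i x y + ε) hr x y hmem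
      have h2 := Set.mem_iInter.1 this 0
      exact h2
    by_contra hcon
    push_neg at hcon
    have hε : (0:ℝ) < (F i (T x) (T y) - α * F i x y) / α := by
      apply div_pos _ hα0; linarith
    have := key _ hε
    rw [mul_add, mul_div_cancel₀ _ (ne_of_gt hα0)] at this
    linarith
  -- contraction for the symmetrized relation
  have hcontrS : ∀ i (x y : X), symRel E x y → F i (T x) (T y) ≤ α * F i x y := by
    intro i x y h
    rcases h with h | h
    · exact hcontr i x y h
    · rw [(hpm i).2.1 (T x) (T y), (hpm i).2.1 x y]
      exact hcontr i y x h
  have hsymT : ∀ x y : X, symRel E x y → symRel E (T x) (T y) := by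
    intro x y h
    exact h.imp (hT.1 x y) (hT.1 y x)
  have hsymIter : ∀ n (x y : X), symRel E x y → symRel E (T^[n] x) (T^[n] y) := by
    intro n
    induction n with
    | zero => intro x y h; simpa using h
    | succ n ih =>
      intro x y h
      rw [Function.iterate_succ_apply', Function.iterate_succ_apply']
      exact hsymT _ _ (ih x y h)
  have hiter : ∀ i n (x y : X), symRel E x y →
      F i (T^[n] x) (T^[n] y) ≤ α ^ n * F i x y := by
    intro i n
    induction n with
    | zero => intro x y _; simp
    | succ n ih =>
      intro x y h
      rw [Function.iterate_succ_apply', Function.iterate_succ_apply', pow_succ]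
      calc F i (T (T^[n] x)) (T (T^[n] y)) ≤ α * F i (T^[n] x) (T^[n] y) :=
            hcontrS i _ _ (hsymIter n x y h)
        _ ≤ α * (α ^ n * F i x y) :=
            mul_le_mul_of_nonneg_left (ih x y h) hα0.le
        _ = α ^ n * α * F i x y := by ring
  -- along a path, iterates get uniformly close
  have hpath : ∀ i (a b : X), Relation.ReflTransGen (symRel E) a b →
      ∃ C : ℝ, 0 ≤ C ∧ ∀ n, F i (T^[n] a) (T^[n] b) ≤ α ^ n * C := by
    intro i a b h
    induction h with
    | refl => exact ⟨0, le_refl 0, fun n => by simp [(hpm i).1]⟩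
    | @tail b c hab hbc ih =>
      obtain ⟨C, hC0, hC⟩ := ih
      refine ⟨C + F i b c, by have := hnn i b c; linarith, fun n => ?_⟩
      have h1 := (hpm i).2.2 (T^[n] a) (T^[n] b) (T^[n] c)
      have h2 := hC n
      have h3 := hiter i n b c hbc
      have : α ^ n * (C + F i b c) = α ^ n * C + α ^ n * F i b c := by ring
      linarith
  -- geometric limit helper
  have hgeom : ∀ C : ℝ, Tendsto (fun n : ℕ => α ^ n * C) atTop (nhds 0) := by
    intro C
    have h := tendsto_pow_atTop_nhds_zero_of_lt_one hα0.le hα1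
    simpa using h.mul_const C
  -- separation via pseudometrics
  have hzero_eq : ∀ x y : X, (∀ i, F i x y = 0) → x = y := by
    intro x y h
    apply hsep
    intro U hU
    obtain ⟨m, f, r, hr, hsub⟩ := hbase U hU
    apply hsub
    refine Set.mem_iInter.2 fun j => ?_
    show F (f j) x y < 1 * r j
    rw [h (f j), one_mul]; exact hr j
  -- tendsto criteria
  have htend : ∀ (u : ℕ → X) (z : X),
      (∀ i, ∀ ε > (0:ℝ), ∀ᶠ n in atTop, F i z (u n) < ε) →
      Tendsto u atTop (nhds z) := by
    intro u z h
    rw [Uniform.tendsto_nhds_right, Filter.tendsto_def]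
    intro U hU
    obtain ⟨m, f, r, hr, hsub⟩ := hbase U hU
    have hev : ∀ᶠ n in atTop, ∀ j : Fin m, F (f j) z (u n) < r j := by
      rw [eventually_all]
      intro j
      exact h (f j) (r j) (hr j)
    filter_upwards [hev] with n hn
    refine hsub (Set.mem_iInter.2 fun j => ?_)
    show F (f j) z (u n) < 1 * r j
    rw [one_mul]; exact hn j
  have htend' : ∀ (u : ℕ → X) (z : X), Tendsto u atTop (nhds z) →
      ∀ i, ∀ ε > (0:ℝ), ∀ᶠ n in atTop, F i z (u n) < ε := by
    intro u z h i ε hε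
    have h1 : ∀ᶠ n in atTop, (z, u n) ∈ VEnt (F i) ε :=
      (Uniform.tendsto_nhds_right.1 h).eventually
        (eventually_mem_set.2 (hent i ε hε))
    exact h1
  -- the Picard sequence from x₀
  obtain ⟨x₀, hx₀⟩ := hXT
  set u : ℕ → X := fun n => T^[n] x₀ with hu
  have huE : ∀ n, (u n, u (n + 1)) ∈ E := by
    intro n
    induction n with
    | zero => simpa [hu] using hx₀
    | succ n ih =>
      have h1 := hT.1 _ _ ih
      have e1 : u (n + 1) = T (u n) := by
        simp only [hu, Function.iterate_succ_apply']
      have e2 : u (n + 2) = T (u (n + 1)) := by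
        simp only [hu, Function.iterate_succ_apply']
      rw [e1, e2]
      exact h1
  have hstep : ∀ i n, F i (u n) (u (n + 1)) ≤ α ^ n * F i x₀ (T x₀) := by
    intro i n
    have e : u (n + 1) = T^[n] (T x₀) := by
      simp only [hu, Function.iterate_succ_apply]
    rw [e]
    exact hiter i n x₀ (T x₀) (Or.inl hx₀)
  have h1α : (0:ℝ) < 1 - α := by linarith
  have hbound : ∀ i n m, n ≤ m →
      F i (u n) (u m) ≤ α ^ n / (1 - α) * F i x₀ (T x₀) := by
    intro i n m hnm
    have key : ∀ m, ∀ n ≤ m,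
        F i (u n) (u m) ≤ (α ^ n - α ^ m) / (1 - α) * F i x₀ (T x₀) := by
      intro m
      induction m with
      | zero =>
        intro n hn
        interval_cases n
        simp [(hpm i).1]
      | succ m ih =>
        intro n hn
        rcases Nat.lt_or_ge n (m + 1) with h | h
        · have hnm' : n ≤ m := Nat.lt_succ_iff.1 h
          have h1 := ih n hnm'
          have h2 := hstep i m
          have h3 := (hpm i).2.2 (u n) (u m) (u (m + 1))
          have e : (α ^ n - α ^ (m + 1)) / (1 - α) * F i x₀ (T x₀)
              = (α ^ n - α ^ m) / (1 - α) * F i x₀ (T x₀)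
                + α ^ m * F i x₀ (T x₀) := by
            field_simp
            ring
          rw [e]
          linarith
        · have : n = m + 1 := le_antisymm hn h
          subst this
          rw [(hpm i).1, sub_self, zero_div, zero_mul]
    have h1 := key m n hnm
    have h2 : (α ^ n - α ^ m) / (1 - α) * F i x₀ (T x₀)
        ≤ α ^ n / (1 - α) * F i x₀ (T x₀) := by
      apply mul_le_mul_of_nonneg_right _ (hnn i x₀ (T x₀))
      apply (div_le_div_iff_of_pos_right h1α).2
      have := pow_nonneg hα0.le m
      linarith
    linarith
  -- the Picard sequence is Cauchy
  have hcauchy : CauchySeq u := by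
    rw [cauchySeq_iff]
    intro V hV
    obtain ⟨m, f, r, hr, hsub⟩ := hbase V hV
    have hev : ∀ᶠ n in atTop, ∀ j : Fin m,
        α ^ n / (1 - α) * F (f j) x₀ (T x₀) < r j := by
      rw [eventually_all]
      intro j
      have h1 : Tendsto (fun n : ℕ => α ^ n / (1 - α) * F (f j) x₀ (T x₀))
          atTop (nhds 0) := by
        have := hgeom ((1 - α)⁻¹ * F (f j) x₀ (T x₀))
        refine this.congr fun n => ?_
        rw [div_eq_mul_inv]; ring
      exact h1.eventually (gt_mem_nhds (hr j))
    obtain ⟨N, hN⟩ := eventually_atTop.1 hev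
    refine ⟨N, fun k hk l hl => ?_⟩
    refine hsub (Set.mem_iInter.2 fun j => ?_)
    show F (f j) (u k) (u l) < 1 * r j
    rw [one_mul]
    rcases le_total k l with h | h
    · have hb := hbound (f j) k l h
      have := hN k hk j
      linarith
    · rw [(hpm (f j)).2.1]
      have hb := hbound (f j) l k h
      have := hN l hl j
      linarith
  obtain ⟨z, hz⟩ := hcomp u hcauchy
  -- z is a fixed point
  obtain ⟨φ, hφmono, hφE⟩ := hstar u z hz huE
  have hφge : ∀ k, k ≤ φ k := fun k => hφmono.le_apply
  have hdz : ∀ i, F i (T z) z = 0 := by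
    intro i
    refine le_antisymm ?_ (hnn i _ _)
    by_contra hcon
    push_neg at hcon
    set ε := F i (T z) z with hε
    have hεpos : 0 < ε := hcon
    have hδ : 0 < min (ε / (2 * α)) (ε / 2) := by
      apply lt_min
      · apply div_pos hεpos; linarith
      · linarith
    obtain ⟨N, hN⟩ := eventually_atTop.1 (htend' u z hz i _ hδ)
    have hk1 : F i z (u (φ N)) < ε / (2 * α) :=
      lt_of_lt_of_le (hN (φ N) (hφge N)) (min_le_left _ _)
    have hk2 : F i z (u (φ N + 1)) < ε / 2 :=
      lt_of_lt_of_le (hN (φ N + 1) (le_trans (hφge N) (Nat.le_succ _)))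
        (min_le_right _ _)
    have hedge : (u (φ N), z) ∈ E := hφE N
    have hc : F i (T (u (φ N))) (T z) ≤ α * F i (u (φ N)) z := hcontr i _ _ hedge
    have e1 : u (φ N + 1) = T (u (φ N)) := by
      simp only [hu, Function.iterate_succ_apply']
    have htri := (hpm i).2.2 (T z) (u (φ N + 1)) z
    have hsym1 : F i (T z) (u (φ N + 1)) = F i (T (u (φ N))) (T z) := by
      rw [e1, (hpm i).2.1]
    have hsym2 : F i (u (φ N)) z = F i z (u (φ N)) := (hpm i).2.1 _ _
    have hsym3 : F i (u (φ N + 1)) z = F i z (u (φ N + 1)) := (hpm i).2.1 _ _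
    have hαb : α * F i (u (φ N)) z < ε / 2 := by
      rw [hsym2]
      calc α * F i z (u (φ N)) < α * (ε / (2 * α)) := by
            apply mul_lt_mul_of_pos_left hk1 hα0
        _ = ε / 2 := by field_simp
    have : ε < ε := by
      calc ε = F i (T z) z := rfl
        _ ≤ F i (T z) (u (φ N + 1)) + F i (u (φ N + 1)) z := htri
        _ < ε / 2 + ε / 2 := by
            rw [hsym1, hsym3]
            exact add_lt_add (lt_of_le_of_lt hc hαb) hk2
        _ = ε := by ring
    exact lt_irrefl _ this
  have hfix : T z = z := hzero_eq _ _ hdz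
  refine ⟨z, hfix, ?_, ?_⟩
  · -- uniqueness
    intro y hy
    apply hzero_eq
    intro i
    obtain ⟨C, hC0, hC⟩ := hpath i y z (hconn y z)
    refine le_antisymm ?_ (hnn i y z)
    have hconst : ∀ n, F i y z ≤ α ^ n * C := by
      intro n
      have h := hC n
      rwa [Function.iterate_fixed hy, Function.iterate_fixed hfix] at h
    exact ge_of_tendsto (hgeom C) (Filter.Eventually.of_forall hconst)
  · -- convergence of all Picard iterates
    intro x
    apply htend
    intro i ε hε
    obtain ⟨C, hC0, hC⟩ := hpath i z x (hconn z x)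
    filter_upwards [(hgeom C).eventually (gt_mem_nhds hε)] with n hn
    have h2 := hC n
    rw [Function.iterate_fixed hfix] at h2
    linarith
end

section
/- Let $X$ be a sequentially complete separated uniform space with graph $G$ satisfying property $(\ast)$, and $T : X \to X$ a Banach $G$-contraction. Then there is a bijection between the fixed point set $\mathrm{Fix}(T)$ and the set of components $\{[x]_{\widetilde{G}} : x \in X_T\}$, given by $x \mapsto [x]_{\widetilde{G}}$; in particular $\mathrm{card}(\mathrm{Fix}(T)) = \mathrm{card}\{[x]_{\widetilde{G}} : x \in X_T\}$. -/
open Filter Topology Set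

/-!
Along an edge of `G`, `T` contracts every generating pseudometric by the factor `α`. For
`x ∈ X_T` consecutive points of the Picard orbit `Tⁿ x` are joined by edges, so the orbit is
Cauchy with a geometric bound; property `(∗)` supplies edges from a subsequence to the limit `z`,
along which `T` contracts, and this forces `T z = z`, with `z` in the component of `x`.
Conversely, the iterates of two points joined by a path in `G̃` approach each other like `αⁿ`,
so two fixed points in one component are inseparable, hence equal.
-/

section

variable {X ι : Type*}

lemma mem_scaledEnt {m : ℕ} {ρ : Fin m → X → X → ℝ} {r : Fin m → ℝ} {α : ℝ} {p : X × X} :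
    p ∈ scaledEnt ρ r α ↔ ∀ i, ρ i p.1 p.2 < α * r i := by
  simp [scaledEnt, VEnt]

lemma reflTransGen_symRel (E : Set (X × X)) :
    Relation.ReflTransGen (symRel E) = Relation.EqvGen (fun a b => (a, b) ∈ E) :=
  Relation.EqvGen.reflTransGen_symmGen _

lemma component_eq_iff {E : Set (X × X)} {x y : X} :
    component E x = component E y ↔ Relation.ReflTransGen (symRel E) x y := by
  simp only [component, reflTransGen_symRel]
  refine ⟨fun h => ?_, fun h => ?_⟩
  · have hy : y ∈ {z | Relation.EqvGen (fun a b => (a, b) ∈ E) y z} := Relation.EqvGen.refl y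
    rwa [← h] at hy
  · ext z
    exact ⟨h.symm.trans y x z, h.trans x y z⟩

namespace IsPseudoMetric

variable {d : X → X → ℝ}

lemma symm (hd : IsPseudoMetric d) (x y : X) : d x y = d y x := hd.2.1 x y

lemma triangle (hd : IsPseudoMetric d) (x y z : X) : d x z ≤ d x y + d y z := hd.2.2 x y z

lemma nonneg (hd : IsPseudoMetric d) (x y : X) : 0 ≤ d x y := by
  have h := hd.triangle x y x
  rw [hd.1, hd.symm y x] at h
  linarith

lemma le_of_le_geometric (hd : IsPseudoMetric d) {α C : ℝ} (hα : α < 1) {u : ℕ → X}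
    (hu : ∀ n, d (u n) (u (n + 1)) ≤ C * α ^ n) (n p : ℕ) :
    d (u n) (u (n + p)) ≤ C * α ^ n / (1 - α) := by
  have h1α : 0 < 1 - α := by linarith
  induction p generalizing n with
  | zero =>
    rw [add_zero, hd.1]
    exact div_nonneg ((hd.nonneg _ _).trans (hu n)) h1α.le
  | succ p ih =>
    calc d (u n) (u (n + (p + 1)))
        ≤ d (u n) (u (n + 1)) + d (u (n + 1)) (u (n + 1 + p)) := by
          rw [show n + (p + 1) = n + 1 + p by omega]
          exact hd.triangle _ _ _
      _ ≤ C * α ^ n + C * α ^ (n + 1) / (1 - α) := add_le_add (hu n) (ih (n + 1))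
      _ = C * α ^ n / (1 - α) := by
          field_simp
          ring

end IsPseudoMetric

namespace GeneratesUniformity

variable [UniformSpace X] {F : ι → X → X → ℝ}

lemma eq_of_forall_le_zero (hgen : GeneratesUniformity F)
    (hsep : ∀ x y : X, (∀ U ∈ uniformity X, (x, y) ∈ U) → x = y) {x y : X}
    (h : ∀ i, F i x y ≤ 0) : x = y := by
  refine hsep x y fun U hU => ?_
  obtain ⟨m, f, r, hr, hsub⟩ := hgen.2.2 U hU
  exact hsub (mem_scaledEnt.2 fun j => by simpa using (h (f j)).trans_lt (hr j))

lemma tendsto_zero_of_tendsto (hgen : GeneratesUniformity F) {u : ℕ → X} {z : X}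
    (hu : Tendsto u atTop (𝓝 z)) (i : ι) :
    Tendsto (fun n => F i (u n) z) atTop (𝓝 0) := by
  refine Metric.tendsto_nhds.2 fun ε hε => ?_
  filter_upwards [Uniform.tendsto_nhds_right.1 hu (hgen.2.1 i ε hε)] with n hn
  rw [Real.dist_eq, sub_zero, abs_of_nonneg ((hgen.1 i).nonneg _ _), (hgen.1 i).symm]
  exact hn

lemma cauchySeq_of_le_tendsto_zero (hgen : GeneratesUniformity F) {u : ℕ → X}
    (b : ι → ℕ → ℝ) (hb : ∀ i, Tendsto (b i) atTop (𝓝 0))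
    (h : ∀ i n p, F i (u n) (u (n + p)) ≤ b i n) : CauchySeq u := by
  refine cauchySeq_iff.2 fun U hU => ?_
  obtain ⟨m, f, r, hr, hsub⟩ := hgen.2.2 U hU
  obtain ⟨N, hN⟩ := eventually_atTop.1 <|
    eventually_all.2 fun j => (hb (f j)).eventually_lt_const (hr j)
  refine ⟨N, fun k hk l hl => hsub (mem_scaledEnt.2 fun j => ?_)⟩
  rw [one_mul]
  rcases le_total k l with hkl | hlk
  · obtain ⟨p, rfl⟩ := Nat.exists_eq_add_of_le hkl
    exact (h _ k p).trans_lt (hN k hk j)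
  · obtain ⟨p, rfl⟩ := Nat.exists_eq_add_of_le hlk
    rw [(hgen.1 (f j)).symm]
    exact (h _ l p).trans_lt (hN l hl j)

end GeneratesUniformity

namespace BanachGContraction

variable {F : ι → X → X → ℝ} {E : Set (X × X)} {T : X → X} {α : ℝ}

lemma iterate_mem (hT : BanachGContraction F E T α) {a b : X} (hab : (a, b) ∈ E) (n : ℕ) :
    (T^[n] a, T^[n] b) ∈ E := by
  induction n with
  | zero => exact hab
  | succ n ih => simpa only [Function.iterate_succ_apply'] using hT.1 _ _ ih

lemma le_mul (hT : BanachGContraction F E T α) (hF : ∀ i, IsPseudoMetric (F i)) {a b : X}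
    (hab : (a, b) ∈ E) (i : ι) : F i (T a) (T b) ≤ α * F i a b := by
  have hlt : ∀ ε > 0, F i (T a) (T b) < α * (F i a b + ε) := fun ε hε => by
    have hr : ∀ _ : Fin 1, 0 < F i a b + ε := fun _ => by linarith [(hF i).nonneg a b]
    have hmem := hT.2 1 (fun _ => i) (fun _ => F i a b + ε) hr a b
      ⟨mem_scaledEnt.2 fun _ => by linarith, hab⟩
    exact mem_scaledEnt.1 hmem 0
  have hlim : Tendsto (fun ε => α * (F i a b + ε)) (𝓝[>] 0) (𝓝 (α * F i a b)) :=
    (((continuous_const_add _).const_mul α).tendsto' 0 _ (by simp)).mono_left nhdsWithin_le_nhds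
  exact ge_of_tendsto hlim (eventually_nhdsWithin_of_forall fun ε hε => (hlt ε hε).le)

lemma iterate_le (hT : BanachGContraction F E T α) (hF : ∀ i, IsPseudoMetric (F i))
    (hα : 0 ≤ α) {a b : X} (hab : (a, b) ∈ E) (i : ι) (n : ℕ) :
    F i (T^[n] a) (T^[n] b) ≤ α ^ n * F i a b := by
  induction n with
  | zero => simp
  | succ n ih =>
    simp only [Function.iterate_succ_apply']
    calc F i (T (T^[n] a)) (T (T^[n] b)) ≤ α * F i (T^[n] a) (T^[n] b) :=
          hT.le_mul hF (hT.iterate_mem hab n) i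
      _ ≤ α * (α ^ n * F i a b) := mul_le_mul_of_nonneg_left ih hα
      _ = α ^ (n + 1) * F i a b := by ring

lemma iterate_le_of_symRel (hT : BanachGContraction F E T α) (hF : ∀ i, IsPseudoMetric (F i))
    (hα : 0 ≤ α) {a b : X} (hab : symRel E a b) (i : ι) (n : ℕ) :
    F i (T^[n] a) (T^[n] b) ≤ α ^ n * F i a b := by
  rcases hab with hab | hba
  · exact hT.iterate_le hF hα hab i n
  · rw [(hF i).symm, (hF i).symm a]
    exact hT.iterate_le hF hα hba i n

lemma exists_iterate_le_of_reflTransGen (hT : BanachGContraction F E T α)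
    (hF : ∀ i, IsPseudoMetric (F i)) (hα : 0 ≤ α) {a b : X}
    (hab : Relation.ReflTransGen (symRel E) a b) (i : ι) :
    ∃ C, ∀ n, F i (T^[n] a) (T^[n] b) ≤ α ^ n * C := by
  induction hab with
  | refl => exact ⟨0, fun n => by simp [(hF i).1]⟩
  | @tail b c _ hbc ih =>
    obtain ⟨C, hC⟩ := ih
    refine ⟨C + F i b c, fun n => ?_⟩
    calc F i (T^[n] a) (T^[n] c) ≤ F i (T^[n] a) (T^[n] b) + F i (T^[n] b) (T^[n] c) :=
          (hF i).triangle _ _ _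
      _ ≤ α ^ n * C + α ^ n * F i b c :=
          add_le_add (hC n) (hT.iterate_le_of_symRel hF hα hbc i n)
      _ = α ^ n * (C + F i b c) := by ring

variable [UniformSpace X]

lemma eq_of_reflTransGen (hT : BanachGContraction F E T α) (hgen : GeneratesUniformity F)
    (hsep : ∀ x y : X, (∀ U ∈ uniformity X, (x, y) ∈ U) → x = y) (hα0 : 0 ≤ α) (hα1 : α < 1)
    {x y : X} (hx : T x = x) (hy : T y = y) (hxy : Relation.ReflTransGen (symRel E) x y) :
    x = y := by
  refine hgen.eq_of_forall_le_zero hsep fun i => ?_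
  obtain ⟨C, hC⟩ := hT.exists_iterate_le_of_reflTransGen hgen.1 hα0 hxy i
  have hlim : Tendsto (fun n => α ^ n * C) atTop (𝓝 0) := by
    simpa using (tendsto_pow_atTop_nhds_zero_of_lt_one hα0 hα1).mul_const C
  refine ge_of_tendsto' hlim fun n => ?_
  simpa only [Function.iterate_fixed hx, Function.iterate_fixed hy] using hC n

lemma eq_of_tendsto (hT : BanachGContraction F E T α) (hgen : GeneratesUniformity F)
    (hsep : ∀ x y : X, (∀ U ∈ uniformity X, (x, y) ∈ U) → x = y) {v : ℕ → X} {z : X}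
    (hv : Tendsto v atTop (𝓝 z)) (hTv : Tendsto (fun k => T (v k)) atTop (𝓝 z))
    (hE : ∀ k, (v k, z) ∈ E) : T z = z := by
  refine (hgen.eq_of_forall_le_zero hsep fun i => ?_).symm
  have hlim : Tendsto (fun k => F i (T (v k)) z + α * F i (v k) z) atTop (𝓝 0) := by
    simpa using (hgen.tendsto_zero_of_tendsto hTv i).add
      ((hgen.tendsto_zero_of_tendsto hv i).const_mul α)
  refine ge_of_tendsto' hlim fun k => ?_
  calc F i z (T z) ≤ F i z (T (v k)) + F i (T (v k)) (T z) := (hgen.1 i).triangle _ _ _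
    _ ≤ F i (T (v k)) z + α * F i (v k) z := by
      rw [(hgen.1 i).symm z]
      gcongr
      exact hT.le_mul hgen.1 (hE k) i

lemma exists_fixedPt_reflTransGen (hT : BanachGContraction F E T α)
    (hgen : GeneratesUniformity F)
    (hsep : ∀ x y : X, (∀ U ∈ uniformity X, (x, y) ∈ U) → x = y)
    (hcomp : ∀ u : ℕ → X, CauchySeq u → ∃ z : X, Tendsto u atTop (𝓝 z))
    (hstar : ∀ (u : ℕ → X) (z : X), Tendsto u atTop (𝓝 z) →
      (∀ n : ℕ, (u n, u (n + 1)) ∈ E) →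
      ∃ φ : ℕ → ℕ, StrictMono φ ∧ ∀ k : ℕ, (u (φ k), z) ∈ E)
    (hα0 : 0 ≤ α) (hα1 : α < 1) {x : X} (hx : (x, T x) ∈ E) :
    ∃ z, T z = z ∧ Relation.ReflTransGen (symRel E) x z := by
  set u : ℕ → X := fun n => T^[n] x with hu
  have hchain : ∀ n, (u n, u (n + 1)) ∈ E := fun n => by
    simpa only [hu, Function.iterate_succ_apply] using hT.iterate_mem hx n
  have hstep : ∀ i n, F i (u n) (u (n + 1)) ≤ F i x (T x) * α ^ n := fun i n => by
    simpa only [hu, Function.iterate_succ_apply, mul_comm] using hT.iterate_le hgen.1 hα0 hx i n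
  have hcauchy : CauchySeq u :=
    hgen.cauchySeq_of_le_tendsto_zero (fun i n => F i x (T x) * α ^ n / (1 - α))
      (fun i => by
        simpa using ((tendsto_pow_atTop_nhds_zero_of_lt_one hα0 hα1).const_mul
          (F i x (T x))).div_const (1 - α))
      (fun i => (hgen.1 i).le_of_le_geometric hα1 (hstep i))
  obtain ⟨z, hz⟩ := hcomp u hcauchy
  obtain ⟨φ, hφ, hφE⟩ := hstar u z hz hchain
  have hTu : Tendsto (fun k => T (u (φ k))) atTop (𝓝 z) :=
    (hz.comp ((tendsto_add_atTop_nat 1).comp hφ.tendsto_atTop)).congr fun k =>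
      Function.iterate_succ_apply' T (φ k) x
  have hpath : ∀ n, Relation.ReflTransGen (symRel E) x (u n) := fun n => by
    induction n with
    | zero => exact .refl
    | succ n ih => exact ih.tail (Or.inl (hchain n))
  exact ⟨z, hT.eq_of_tendsto hgen hsep (hz.comp hφ.tendsto_atTop) hTu hφE,
    (hpath (φ 0)).tail (Or.inl (hφE 0))⟩

end BanachGContraction

end

theorem stmt14 {X ι : Type*} [UniformSpace X] (F : ι → X → X → ℝ)
    (hgen : GeneratesUniformity F)
    (hsep : ∀ x y : X, (∀ U ∈ uniformity X, (x, y) ∈ U) → x = y)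
    (hcomp : ∀ u : ℕ → X, CauchySeq u → ∃ z : X, Tendsto u atTop (nhds z))
    (E : Set (X × X)) (hloop : ∀ x : X, (x, x) ∈ E)
    (hstar : ∀ (u : ℕ → X) (z : X), Tendsto u atTop (nhds z) →
      (∀ n : ℕ, (u n, u (n + 1)) ∈ E) →
      ∃ φ : ℕ → ℕ, StrictMono φ ∧ ∀ k : ℕ, (u (φ k), z) ∈ E)
    (T : X → X) (α : ℝ) (hα0 : 0 < α) (hα1 : α < 1)
    (hT : BanachGContraction F E T α) :
    Set.BijOn (fun x => component E x) {x : X | T x = x}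
      ((fun x => component E x) '' {x : X | (x, T x) ∈ E}) := by
  refine ⟨fun x (hx : T x = x) => ⟨x, ?_, rfl⟩, fun x hx y hy hxy => ?_, ?_⟩
  · show (x, T x) ∈ E
    rw [hx]
    exact hloop x
  · exact hT.eq_of_reflTransGen hgen hsep hα0.le hα1 hx hy (component_eq_iff.1 hxy)
  · rintro _ ⟨x, hx, rfl⟩
    obtain ⟨z, hz, hxz⟩ := hT.exists_fixedPt_reflTransGen hgen hsep hcomp hstar hα0.le hα1 hx
    exact ⟨z, hz, (component_eq_iff.2 hxz).symm⟩
end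

section
/- Let $X$ be a sequentially complete separated uniform space with graph $G$ satisfying property $(\ast)$, and $T : X \to X$ a Banach $G$-contraction. Then $T$ has a fixed point if and only if $X_T = \{x : (x, Tx) \in E(G)\}$ is nonempty; and $T$ has a unique fixed point if and only if there exists $x \in X_T$ with $X_T \subseteq [x]_{\widetilde{G}}$. -/
open Filter Topology Set

open Relation

set_option linter.unusedSectionVars false

section helpers

variable {X ι : Type*} [UniformSpace X] {F : ι → X → X → ℝ} {E : Set (X × X)}
  {T : X → X} {α : ℝ}

lemma pm_refl (hgen : GeneratesUniformity F) (i : ι) (x : X) : F i x x = 0 := (hgen.1 i).1 x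

lemma pm_symm (hgen : GeneratesUniformity F) (i : ι) (x y : X) : F i x y = F i y x :=
  (hgen.1 i).2.1 x y

lemma pm_tri (hgen : GeneratesUniformity F) (i : ι) (x y z : X) :
    F i x z ≤ F i x y + F i y z := (hgen.1 i).2.2 x y z

lemma pm_nonneg (hgen : GeneratesUniformity F) (i : ι) (x y : X) : 0 ≤ F i x y := by
  have h := pm_tri hgen i x y x
  rw [pm_refl hgen i x, pm_symm hgen i y x] at h
  linarith

lemma le_of_forall_eps {a b : ℝ} (h : ∀ ε : ℝ, 0 < ε → a ≤ b + ε) : a ≤ b := by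
  by_contra hc
  push_neg at hc
  linarith [h ((a - b) / 2) (by linarith)]

lemma eq_of_dists (hgen : GeneratesUniformity F)
    (hsep : ∀ x y : X, (∀ U ∈ uniformity X, (x, y) ∈ U) → x = y)
    {x y : X} (h : ∀ i, F i x y ≤ 0) : x = y := by
  apply hsep
  intro U hU
  obtain ⟨m, f, r, hr, hsub⟩ := hgen.2.2 U hU
  apply hsub
  rw [scaledEnt, Set.mem_iInter]
  intro j
  show F (f j) x y < 1 * r j
  rw [one_mul]
  exact lt_of_le_of_lt (h (f j)) (hr j)

lemma contr (hgen : GeneratesUniformity F) (hT : BanachGContraction F E T α) (hα0 : 0 < α)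
    (i : ι) {x y : X} (hxy : (x, y) ∈ E) : F i (T x) (T y) ≤ α * F i x y := by
  apply le_of_forall_eps
  intro ε hε
  set c : ℝ := F i x y + ε / α with hc
  have hF := pm_nonneg hgen i x y
  have hd : 0 < ε / α := div_pos hε hα0
  have hcpos : 0 < c := by rw [hc]; linarith
  have hmem : (x, y) ∈ scaledEnt (fun _ : Fin 1 => F i) (fun _ => c) 1 := by
    rw [scaledEnt, Set.mem_iInter]
    intro j
    show F i x y < 1 * c
    rw [one_mul, hc]; linarith
  have hout := hT.2 1 (fun _ => i) (fun _ => c) (fun _ => hcpos) x y ⟨hmem, hxy⟩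
  rw [scaledEnt, Set.mem_iInter] at hout
  have h0 : F i (T x) (T y) < α * c := hout 0
  have : α * c = α * F i x y + ε := by
    rw [hc, mul_add, mul_div_cancel₀ ε (ne_of_gt hα0)]
  linarith

lemma edge_iter (hT : BanachGContraction F E T α) {x y : X} (h : (x, y) ∈ E) :
    ∀ n, (T^[n] x, T^[n] y) ∈ E := by
  intro n
  induction n with
  | zero => simpa using h
  | succ n ih =>
    rw [Function.iterate_succ_apply', Function.iterate_succ_apply']
    exact hT.1 _ _ ih

lemma dist_iter (hgen : GeneratesUniformity F) (hT : BanachGContraction F E T α)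
    (hα0 : 0 < α) {x y : X} (h : (x, y) ∈ E) (i : ι) :
    ∀ n, F i (T^[n] x) (T^[n] y) ≤ α ^ n * F i x y := by
  intro n
  induction n with
  | zero => simp
  | succ n ih =>
    rw [Function.iterate_succ_apply', Function.iterate_succ_apply']
    calc F i (T (T^[n] x)) (T (T^[n] y)) ≤ α * F i (T^[n] x) (T^[n] y) :=
          contr hgen hT hα0 i (edge_iter hT h n)
      _ ≤ α * (α ^ n * F i x y) := mul_le_mul_of_nonneg_left ih hα0.le
      _ = α ^ (n + 1) * F i x y := by ring

lemma ev_small (hgen : GeneratesUniformity F) {u : ℕ → X} {z : X}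
    (hz : Filter.Tendsto u Filter.atTop (nhds z)) (i : ι) {ε : ℝ} (hε : 0 < ε) :
    ∀ᶠ n in Filter.atTop, F i (u n) z < ε := by
  have h1 : VEnt (F i) ε ∈ uniformity X := hgen.2.1 i ε hε
  have h2 : ∀ᶠ n in Filter.atTop, (z, u n) ∈ VEnt (F i) ε :=
    (Uniform.tendsto_nhds_right.1 hz).eventually (Filter.eventually_mem_set.2 h1)
  filter_upwards [h2] with n hn
  rw [pm_symm hgen i (u n) z]
  exact hn

lemma tpow (hα0 : 0 < α) (hα1 : α < 1) (c : ℝ) :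
    Filter.Tendsto (fun n : ℕ => α ^ n * c) Filter.atTop (nhds 0) := by
  simpa using (tendsto_pow_atTop_nhds_zero_of_lt_one hα0.le hα1).mul_const c

lemma comp_small (hgen : GeneratesUniformity F) (hT : BanachGContraction F E T α)
    (hα0 : 0 < α) (hα1 : α < 1) {a b : X} (hab : ReflTransGen (symRel E) a b) :
    ∀ ε : ℝ, 0 < ε → ∀ i, ∀ᶠ n in Filter.atTop, F i (T^[n] a) (T^[n] b) < ε := by
  induction hab with
  | refl =>
    intro ε hε i
    filter_upwards with n
    rw [pm_refl hgen i]
    exact hε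
  | @tail c b _ h2 ih =>
    intro ε hε i
    have hb : ∀ n, F i (T^[n] c) (T^[n] b) ≤ α ^ n * F i c b := by
      intro n
      rcases h2 with h2 | h2
      · exact dist_iter hgen hT hα0 h2 i n
      · rw [pm_symm hgen i (T^[n] c) (T^[n] b)]
        calc F i (T^[n] b) (T^[n] c) ≤ α ^ n * F i b c := dist_iter hgen hT hα0 h2 i n
          _ = α ^ n * F i c b := by rw [pm_symm hgen i b c]
    have ev2 : ∀ᶠ n in Filter.atTop, α ^ n * F i c b < ε / 2 :=
      (tpow hα0 hα1 (F i c b)).eventually_lt_const (by linarith)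
    filter_upwards [ih (ε / 2) (by linarith) i, ev2] with n hn1 hn2
    calc F i (T^[n] a) (T^[n] b) ≤ F i (T^[n] a) (T^[n] c) + F i (T^[n] c) (T^[n] b) :=
          pm_tri hgen i _ _ _
      _ < ε / 2 + (ε / 2) := by have := hb n; linarith
      _ = ε := by ring

lemma fixed_unique (hgen : GeneratesUniformity F)
    (hsep : ∀ x y : X, (∀ U ∈ uniformity X, (x, y) ∈ U) → x = y)
    (hT : BanachGContraction F E T α) (hα0 : 0 < α) (hα1 : α < 1) {x y z : X}
    (hy : T y = y) (hz : T z = z)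
    (h1 : ReflTransGen (symRel E) x y) (h2 : ReflTransGen (symRel E) x z) : y = z := by
  apply eq_of_dists hgen hsep
  intro i
  have : ∀ ε : ℝ, 0 < ε → F i y z ≤ 0 + ε := by
    intro ε hε
    have e1 := comp_small hgen hT hα0 hα1 h1 (ε / 2) (by linarith) i
    have e2 := comp_small hgen hT hα0 hα1 h2 (ε / 2) (by linarith) i
    obtain ⟨n, hn1, hn2⟩ := (e1.and e2).exists
    rw [Function.iterate_fixed hy n] at hn1
    rw [Function.iterate_fixed hz n] at hn2
    have tri := pm_tri hgen i y (T^[n] x) z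
    rw [pm_symm hgen i y (T^[n] x)] at tri
    linarith
  exact le_of_forall_eps this

lemma rtg_symm {r : X → X → Prop} (hr : ∀ a b : X, r a b → r b a) {a b : X}
    (h : ReflTransGen r a b) : ReflTransGen r b a := by
  induction h with
  | refl => exact .refl
  | tail _ h2 ih => exact (ReflTransGen.single (hr _ _ h2)).trans ih

lemma orbit_lemma (hgen : GeneratesUniformity F)
    (hsep : ∀ x y : X, (∀ U ∈ uniformity X, (x, y) ∈ U) → x = y)
    (hcomp : ∀ u : ℕ → X, CauchySeq u → ∃ z : X, Filter.Tendsto u Filter.atTop (nhds z))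
    (hstar : ∀ (u : ℕ → X) (z : X), Filter.Tendsto u Filter.atTop (nhds z) →
      (∀ n : ℕ, (u n, u (n + 1)) ∈ E) →
      ∃ φ : ℕ → ℕ, StrictMono φ ∧ ∀ k : ℕ, (u (φ k), z) ∈ E)
    (hT : BanachGContraction F E T α) (hα0 : 0 < α) (hα1 : α < 1)
    (x₀ : X) (h0 : (x₀, T x₀) ∈ E) :
    ∃ z : X, T z = z ∧ ReflTransGen (symRel E) x₀ z := by
  set u : ℕ → X := fun n => T^[n] x₀ with hu
  have hE : ∀ n, (u n, u (n + 1)) ∈ E := by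
    intro n
    have h := edge_iter hT h0 n
    rwa [← Function.iterate_succ_apply] at h
  have hstep : ∀ (i : ι) n, F i (u n) (u (n + 1)) ≤ α ^ n * F i x₀ (T x₀) := by
    intro i n
    have h := dist_iter hgen hT hα0 h0 i n
    rwa [← Function.iterate_succ_apply] at h
  have hne : (1 : ℝ) - α ≠ 0 := by linarith
  have hB : (0 : ℝ) ≤ (1 - α)⁻¹ := inv_nonneg.2 (by linarith)
  have hchain : ∀ (i : ι) k p, F i (u k) (u (k + p)) ≤ α ^ k * ((1 - α)⁻¹ * F i x₀ (T x₀)) := by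
    intro i k p
    induction p generalizing k with
    | zero =>
      simp only [Nat.add_zero]
      rw [pm_refl hgen i]
      exact mul_nonneg (pow_nonneg hα0.le k) (mul_nonneg hB (pm_nonneg hgen i _ _))
    | succ p ih =>
      have t1 := hstep i k
      have t2 := ih (k + 1)
      have tri := pm_tri hgen i (u k) (u (k + 1)) (u ((k + 1) + p))
      have harr : k + (p + 1) = (k + 1) + p := by omega
      rw [harr]
      have key : α ^ k * F i x₀ (T x₀) + α ^ (k + 1) * ((1 - α)⁻¹ * F i x₀ (T x₀))
          = α ^ k * ((1 - α)⁻¹ * F i x₀ (T x₀)) := by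
        rw [pow_succ]
        field_simp
        ring
      linarith
  have hcau : CauchySeq u := by
    rw [cauchySeq_iff]
    intro V hV
    obtain ⟨m, f, r, hr, hsub⟩ := hgen.2.2 V hV
    have hev : ∀ᶠ n in Filter.atTop,
        ∀ j : Fin m, α ^ n * ((1 - α)⁻¹ * F (f j) x₀ (T x₀)) < r j := by
      rw [Filter.eventually_all]
      intro j
      exact (tpow hα0 hα1 _).eventually_lt_const (hr j)
    obtain ⟨N, hN⟩ := Filter.eventually_atTop.1 hev
    refine ⟨N, fun k hk l hl => hsub ?_⟩
    rw [scaledEnt, Set.mem_iInter]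
    intro j
    show F (f j) (u k) (u l) < 1 * r j
    rw [one_mul]
    have hBC : (0 : ℝ) ≤ (1 - α)⁻¹ * F (f j) x₀ (T x₀) :=
      mul_nonneg hB (pm_nonneg hgen (f j) _ _)
    rcases le_total k l with h | h
    · obtain ⟨p, rfl⟩ := Nat.exists_eq_add_of_le h
      calc F (f j) (u k) (u (k + p)) ≤ α ^ k * ((1 - α)⁻¹ * F (f j) x₀ (T x₀)) := hchain (f j) k p
        _ ≤ α ^ N * ((1 - α)⁻¹ * F (f j) x₀ (T x₀)) :=
            mul_le_mul_of_nonneg_right (pow_le_pow_of_le_one hα0.le hα1.le hk) hBC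
        _ < r j := hN N le_rfl j
    · obtain ⟨p, rfl⟩ := Nat.exists_eq_add_of_le h
      rw [pm_symm hgen (f j)]
      calc F (f j) (u l) (u (l + p)) ≤ α ^ l * ((1 - α)⁻¹ * F (f j) x₀ (T x₀)) := hchain (f j) l p
        _ ≤ α ^ N * ((1 - α)⁻¹ * F (f j) x₀ (T x₀)) :=
            mul_le_mul_of_nonneg_right (pow_le_pow_of_le_one hα0.le hα1.le hl) hBC
        _ < r j := hN N le_rfl j
  obtain ⟨z, hz⟩ := hcomp u hcau
  obtain ⟨φ, hφ, hφE⟩ := hstar u z hz hE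
  have hfix : T z = z := by
    apply eq_of_dists hgen hsep
    intro i
    apply le_of_forall_eps
    intro ε hε
    obtain ⟨N, hN⟩ := Filter.eventually_atTop.1 (ev_small hgen hz i (show (0:ℝ) < ε/2 by linarith))
    have e1 : F i (u (φ N)) z < ε / 2 := hN _ hφ.le_apply
    have e2 : F i (u (φ N + 1)) z < ε / 2 := hN _ (by have := hφ.le_apply (x := N); omega)
    have hTu : T (u (φ N)) = u (φ N + 1) := (Function.iterate_succ_apply' T (φ N) x₀).symm
    have hc : F i (T (u (φ N))) (T z) ≤ α * F i (u (φ N)) z := contr hgen hT hα0 i (hφE N)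
    have s1 : F i (T z) (u (φ N + 1)) ≤ α * F i (u (φ N)) z := by
      rw [pm_symm hgen i (T z) (u (φ N + 1)), ← hTu]
      exact hc
    have s2 : α * F i (u (φ N)) z ≤ F i (u (φ N)) z := by
      nlinarith [pm_nonneg hgen i (u (φ N)) z]
    have tri := pm_tri hgen i (T z) (u (φ N + 1)) z
    linarith
  have hpath : ∀ n, ReflTransGen (symRel E) x₀ (u n) := by
    intro n
    induction n with
    | zero => exact ReflTransGen.refl
    | succ n ih => exact ih.tail (Or.inl (hE n))
  exact ⟨z, hfix, (hpath (φ 0)).tail (Or.inl (hφE 0))⟩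

end helpers

theorem stmt15 {X ι : Type*} [UniformSpace X] (F : ι → X → X → ℝ)
    (hgen : GeneratesUniformity F)
    (hsep : ∀ x y : X, (∀ U ∈ uniformity X, (x, y) ∈ U) → x = y)
    (hcomp : ∀ u : ℕ → X, CauchySeq u → ∃ z : X, Tendsto u atTop (nhds z))
    (E : Set (X × X)) (hloop : ∀ x : X, (x, x) ∈ E)
    (hstar : ∀ (u : ℕ → X) (z : X), Tendsto u atTop (nhds z) →
      (∀ n : ℕ, (u n, u (n + 1)) ∈ E) →
      ∃ φ : ℕ → ℕ, StrictMono φ ∧ ∀ k : ℕ, (u (φ k), z) ∈ E)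
    (T : X → X) (α : ℝ) (hα0 : 0 < α) (hα1 : α < 1)
    (hT : BanachGContraction F E T α) :
    ((∃ x : X, T x = x) ↔ ∃ x : X, (x, T x) ∈ E) ∧
    ((∃! x : X, T x = x) ↔
      ∃ x : X, (x, T x) ∈ E ∧ ∀ y : X, (y, T y) ∈ E → y ∈ component E x) := by
  have symm_symRel : ∀ a b : X, symRel E a b → symRel E b a :=
    fun a b h => h.elim Or.inr Or.inl
  constructor
  · constructor
    · rintro ⟨x, hx⟩
      exact ⟨x, by rw [hx]; exact hloop x⟩
    · rintro ⟨x, hx⟩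
      obtain ⟨z, hz, -⟩ := orbit_lemma hgen hsep hcomp hstar hT hα0 hα1 x hx
      exact ⟨z, hz⟩
  · constructor
    · rintro ⟨x, hx, huniq⟩
      refine ⟨x, by rw [hx]; exact hloop x, fun y hy => ?_⟩
      obtain ⟨z, hz, hpath⟩ := orbit_lemma hgen hsep hcomp hstar hT hα0 hα1 y hy
      have hzx : z = x := huniq z hz
      show Relation.ReflTransGen (symRel E) x y
      rw [← hzx]
      exact rtg_symm symm_symRel hpath
    · rintro ⟨x, hxE, hsubset⟩
      obtain ⟨z, hz, -⟩ := orbit_lemma hgen hsep hcomp hstar hT hα0 hα1 x hxE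
      refine ⟨z, hz, fun y hy => ?_⟩
      have hyE : (y, T y) ∈ E := by rw [hy]; exact hloop y
      have hzE : (z, T z) ∈ E := by rw [hz]; exact hloop z
      exact fixed_unique hgen hsep hT hα0 hα1 hy hz (hsubset y hyE) (hsubset z hzE)
end
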